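/- Let V be a nonempty finite set, J : V → V → ℝ symmetric with zero diagonal and J_{pq} ≥ 0, h : V → ℝ arbitrary, and ⟨·⟩ the associated Gibbs expectation; set ρ_p = (σ_p + 1)/2. Then for any four vertices u₁, v₁, u₂, v₂ ∈ V: | ⟨ρ_{u₁}(1−ρ_{v₁})·ρ_{u₂}(1−ρ_{v₂})⟩ − ⟨ρ_{u₁}(1−ρ_{v₁})⟩·⟨ρ_{u₂}(1−ρ_{v₂})⟩ | ≤ 4·|Cov(ρ_{u₁},ρ_{u₂})| + 2·|Cov(ρ_{u₁},ρ_{v₂})| + 2·|Cov(ρ_{u₂},ρ_{v₁})| + |Cov(ρ_{v₁},ρ_{v₂})|, where Cov(f,g) = ⟨fg⟩ − ⟨f⟩⟨g⟩. -/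
import Mathlib


open Finset

/-- The spin value (±1) associated to a Boolean configuration. -/
noncomputable def spin {V : Type*} (s : V → Bool) : V → ℝ :=
  fun p => if s p then 1 else -1

/-- Boltzmann weight of a spin configuration for couplings `J` and field `h`. -/
noncomputable def isingWeight {V : Type*} [Fintype V] (J : V → V → ℝ) (h : V → ℝ)
    (s : V → Bool) : ℝ :=
  Real.exp ((1 / 2) * ∑ p, ∑ q, J p q * spin s p * spin s q + ∑ p, h p * spin s p)

/-- Gibbs expectation of an observable `f` for couplings `J` and field `h`. -/
noncomputable def isingExpect {V : Type*} [Fintype V] [DecidableEq V]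
    (J : V → V → ℝ) (h : V → ℝ) (f : (V → ℝ) → ℝ) : ℝ :=
  (∑ s : V → Bool, f (spin s) * isingWeight J h s) / ∑ s : V → Bool, isingWeight J h s

/-- Covariance of two observables under the Gibbs measure. -/
noncomputable def isingCov {V : Type*} [Fintype V] [DecidableEq V]
    (J : V → V → ℝ) (h : V → ℝ) (f g : (V → ℝ) → ℝ) : ℝ :=
  isingExpect J h (fun σ => f σ * g σ) - isingExpect J h f * isingExpect J h g

section Aux

variable {V : Type*} [Fintype V] [DecidableEq V] (J : V → V → ℝ) (h : V → ℝ)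

/-- Gibbs expectation for functions on Boolean configurations. -/
noncomputable def gibbsB (F : (V → Bool) → ℝ) : ℝ :=
  (∑ s : V → Bool, F s * isingWeight J h s) / ∑ s : V → Bool, isingWeight J h s

/-- Covariance for functions on Boolean configurations. -/
noncomputable def bcov (F G : (V → Bool) → ℝ) : ℝ :=
  gibbsB J h (fun s => F s * G s) - gibbsB J h F * gibbsB J h G

lemma Zpos : 0 < ∑ s : V → Bool, isingWeight J h s :=
  Finset.sum_pos (fun s _ => Real.exp_pos _) ⟨fun _ => true, mem_univ _⟩

lemma gibbsB_add (F G : (V → Bool) → ℝ) :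
    gibbsB J h (fun s => F s + G s) = gibbsB J h F + gibbsB J h G := by
  unfold gibbsB
  rw [← add_div]
  congr 1
  rw [← Finset.sum_add_distrib]
  exact Finset.sum_congr rfl fun s _ => by ring

lemma gibbsB_smul (c : ℝ) (F : (V → Bool) → ℝ) :
    gibbsB J h (fun s => c * F s) = c * gibbsB J h F := by
  unfold gibbsB
  rw [← mul_div_assoc, Finset.mul_sum]
  congr 1
  exact Finset.sum_congr rfl fun s _ => by beta_reduce; ring

lemma gibbsB_const (c : ℝ) : gibbsB J h (fun _ => c) = c := by
  unfold gibbsB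
  rw [← Finset.mul_sum, mul_div_assoc, div_self (Zpos J h).ne', mul_one]

lemma bcov_comm (F G : (V → Bool) → ℝ) : bcov J h F G = bcov J h G F := by
  unfold bcov
  simp_rw [mul_comm (F _) (G _)]
  ring

lemma bcov_sub_left (F G H : (V → Bool) → ℝ) :
    bcov J h (fun s => F s - G s) H = bcov J h F H - bcov J h G H := by
  unfold bcov
  have e1 : (fun s => (F s - G s) * H s) = fun s => F s * H s + (-1) * (G s * H s) :=
    funext fun s => by ring
  have e2 : (fun s => F s - G s) = fun s => F s + (-1) * G s := funext fun s => by ring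
  rw [e1, e2, gibbsB_add, gibbsB_add, gibbsB_smul, gibbsB_smul]
  ring

lemma bcov_expand_mul_left (X Y H : (V → Bool) → ℝ) :
    bcov J h (fun s => X s * Y s) H =
      bcov J h X H + bcov J h Y H + bcov J h (fun s => (1 - X s) * (1 - Y s)) H := by
  unfold bcov
  have e1 : (fun s => X s * Y s * H s) =
      fun s => X s * H s + (Y s * H s + ((-1) * H s + (1 - X s) * (1 - Y s) * H s)) :=
    funext fun s => by ring
  have e2 : (fun s => X s * Y s) =
      fun s => X s + (Y s + ((-1) * 1 + (1 - X s) * (1 - Y s))) :=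
    funext fun s => by ring
  rw [e1, e2, gibbsB_add, gibbsB_add, gibbsB_add, gibbsB_add, gibbsB_add, gibbsB_add,
    gibbsB_smul, gibbsB_smul, gibbsB_const]
  ring

lemma weight_supermul (hJ : ∀ p q, 0 ≤ J p q) (a b : V → Bool) :
    isingWeight J h a * isingWeight J h b ≤
      isingWeight J h (a ⊓ b) * isingWeight J h (a ⊔ b) := by
  unfold isingWeight
  rw [← Real.exp_add, ← Real.exp_add, Real.exp_le_exp]
  have keyf : ∀ x y : Bool,
      ((if (x ⊓ y) = true then (1:ℝ) else -1) + if (x ⊔ y) = true then 1 else -1)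
        = (if x = true then 1 else -1) + (if y = true then 1 else -1) := by
    intro x y; cases x <;> cases y <;> norm_num
  have keyc : ∀ x y z w : Bool,
      ((if x = true then (1:ℝ) else -1) * (if z = true then 1 else -1) +
       (if y = true then (1:ℝ) else -1) * (if w = true then 1 else -1)) ≤
      ((if (x ⊓ y) = true then (1:ℝ) else -1) * (if (z ⊓ w) = true then 1 else -1) +
       (if (x ⊔ y) = true then (1:ℝ) else -1) * (if (z ⊔ w) = true then 1 else -1)) := by
    intro x y z w; cases x <;> cases y <;> cases z <;> cases w <;> norm_num
  have hfield : ∑ p, h p * spin (a ⊓ b) p + ∑ p, h p * spin (a ⊔ b) p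
      = ∑ p, h p * spin a p + ∑ p, h p * spin b p := by
    rw [← Finset.sum_add_distrib, ← Finset.sum_add_distrib]
    refine Finset.sum_congr rfl fun p _ => ?_
    simp only [spin, Pi.inf_apply, Pi.sup_apply]
    linear_combination h p * keyf (a p) (b p)
  have hcoup : ∑ p, ∑ q, J p q * spin a p * spin a q + ∑ p, ∑ q, J p q * spin b p * spin b q
      ≤ ∑ p, ∑ q, J p q * spin (a ⊓ b) p * spin (a ⊓ b) q
        + ∑ p, ∑ q, J p q * spin (a ⊔ b) p * spin (a ⊔ b) q := by
    rw [← Finset.sum_add_distrib, ← Finset.sum_add_distrib]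
    refine Finset.sum_le_sum fun p _ => ?_
    rw [← Finset.sum_add_distrib, ← Finset.sum_add_distrib]
    refine Finset.sum_le_sum fun q _ => ?_
    have hk : spin a p * spin a q + spin b p * spin b q ≤
        spin (a ⊓ b) p * spin (a ⊓ b) q + spin (a ⊔ b) p * spin (a ⊔ b) q := by
      simpa only [spin, Pi.inf_apply, Pi.sup_apply] using keyc (a p) (b p) (a q) (b q)
    nlinarith [mul_le_mul_of_nonneg_left hk (hJ p q)]
  linarith

lemma bcov_nonneg (hJ : ∀ p q, 0 ≤ J p q) (F G : (V → Bool) → ℝ)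
    (hF0 : ∀ s, 0 ≤ F s) (hG0 : ∀ s, 0 ≤ G s) (hF : Monotone F) (hG : Monotone G) :
    0 ≤ bcov J h F G := by
  have key := fkg (f := F) (g := G) (μ := isingWeight J h)
    (fun s => (Real.exp_pos _).le) (fun s => hF0 s) (fun s => hG0 s) hF hG
    (weight_supermul J h hJ)
  rw [bcov, sub_nonneg, gibbsB, gibbsB, gibbsB, div_mul_div_comm,
    div_le_div_iff₀ (mul_pos (Zpos J h) (Zpos J h)) (Zpos J h)]
  have e : ∀ (F' : (V → Bool) → ℝ), ∑ s : V → Bool, isingWeight J h s * F' s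
      = ∑ s : V → Bool, F' s * isingWeight J h s :=
    fun F' => Finset.sum_congr rfl fun s _ => mul_comm _ _
  rw [e F, e G, e (fun s => F s * G s)] at key
  nlinarith [mul_le_mul_of_nonneg_right key (Zpos J h).le, Zpos J h]

lemma bcov_nonpos (hJ : ∀ p q, 0 ≤ J p q) (F G : (V → Bool) → ℝ)
    (hF1 : ∀ s, F s ≤ 1) (hG0 : ∀ s, 0 ≤ G s) (hF : Antitone F) (hG : Monotone G) :
    bcov J h F G ≤ 0 := by
  have h1 : (0:ℝ) ≤ bcov J h (fun s => (fun _ => (1:ℝ)) s - F s) G := by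
    refine bcov_nonneg J h hJ _ G (fun s => by simpa using hF1 s) hG0 ?_ hG
    intro s t hst
    simp only
    linarith [hF hst]
  rw [bcov_sub_left] at h1
  have hc : bcov J h (fun _ => (1:ℝ)) G = 0 := by
    unfold bcov
    have e1 : (fun s => (1:ℝ) * G s) = fun s => (1:ℝ) * G s := rfl
    rw [show (fun s : V → Bool => (fun _ => (1:ℝ)) s * G s) = fun s => (1:ℝ) * G s from rfl,
      gibbsB_smul, gibbsB_const]
    ring
  linarith

/-- lattice-gas variable on Boolean configurations -/
noncomputable def occ (p : V) : (V → Bool) → ℝ := fun s => if s p then 1 else 0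

lemma occ_nonneg (p : V) (s : V → Bool) : 0 ≤ occ p s := by
  unfold occ; split <;> norm_num

lemma occ_le_one (p : V) (s : V → Bool) : occ p s ≤ 1 := by
  unfold occ; split <;> norm_num

lemma occ_monotone (p : V) : Monotone (occ p : (V → Bool) → ℝ) := by
  intro s t hst
  unfold occ
  by_cases hs : s p = true
  · have htp : t p = true := le_antisymm (Bool.le_true _) (hs ▸ hst p)
    simp [hs, htp]
  · have h0 : (if s p = true then (1:ℝ) else 0) = 0 := by simp [hs]
    rw [h0]
    split <;> norm_num

lemma mono_mul {F G : (V → Bool) → ℝ} (hF0 : ∀ s, 0 ≤ F s) (hG0 : ∀ s, 0 ≤ G s)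
    (hF : Monotone F) (hG : Monotone G) : Monotone fun s => F s * G s := by
  intro s t hst
  exact mul_le_mul (hF hst) (hG hst) (hG0 s) (le_trans (hF0 s) (hF hst))

lemma anti_mul {F G : (V → Bool) → ℝ} (hF0 : ∀ s, 0 ≤ F s) (hG0 : ∀ s, 0 ≤ G s)
    (hF : Antitone F) (hG : Antitone G) : Antitone fun s => F s * G s := by
  intro s t hst
  exact mul_le_mul (hF hst) (hG hst) (hG0 t) (le_trans (hF0 t) (hF hst))

/-- key bound : covariance of a product of occupations against a monotone observable -/
lemma bcov_mul_le (hJ : ∀ p q, 0 ≤ J p q) (u v : V) (H : (V → Bool) → ℝ)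
    (hH0 : ∀ s, 0 ≤ H s) (hH : Monotone H) :
    bcov J h (fun s => occ u s * occ v s) H ≤ bcov J h (occ u) H + bcov J h (occ v) H := by
  rw [bcov_expand_mul_left]
  have hr : bcov J h (fun s => (1 - occ u s) * (1 - occ v s)) H ≤ 0 := by
    refine bcov_nonpos J h hJ _ H (fun s => ?_) hH0 ?_ hH
    · have := occ_nonneg u s; have := occ_nonneg v s
      have := occ_le_one u s; have := occ_le_one v s
      nlinarith
    · refine anti_mul (fun s => by linarith [occ_le_one u s])
        (fun s => by linarith [occ_le_one v s]) ?_ ?_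
      · intro s t hst; simp only; linarith [occ_monotone u hst]
      · intro s t hst; simp only; linarith [occ_monotone v hst]
  linarith

end Aux

/-- Bound on the covariance of `ρ_{u₁}(1−ρ_{v₁})` and `ρ_{u₂}(1−ρ_{v₂})` in terms of
covariances of the lattice-gas variables `ρ_p = (σ_p + 1)/2`. -/
theorem occupied_vacant_covariance_bound {V : Type*} [Fintype V] [DecidableEq V] [Nonempty V]
    (J : V → V → ℝ) (h : V → ℝ)
    (hsymm : ∀ p q, J p q = J q p) (hdiag : ∀ p, J p p = 0)
    (hJ : ∀ p q, 0 ≤ J p q)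
    (u₁ v₁ u₂ v₂ : V) :
    |isingCov J h (fun σ => (σ u₁ + 1) / 2 * (1 - (σ v₁ + 1) / 2))
        (fun σ => (σ u₂ + 1) / 2 * (1 - (σ v₂ + 1) / 2))|
      ≤ 4 * |isingCov J h (fun σ => (σ u₁ + 1) / 2) (fun σ => (σ u₂ + 1) / 2)| +
        2 * |isingCov J h (fun σ => (σ u₁ + 1) / 2) (fun σ => (σ v₂ + 1) / 2)| +
        2 * |isingCov J h (fun σ => (σ u₂ + 1) / 2) (fun σ => (σ v₁ + 1) / 2)| +
        |isingCov J h (fun σ => (σ v₁ + 1) / 2) (fun σ => (σ v₂ + 1) / 2)| := by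
  classical
  -- reduce isingCov to bcov
  have hkey : ∀ f g : (V → ℝ) → ℝ, isingCov J h f g =
      bcov J h (fun s => f (spin s)) (fun s => g (spin s)) := fun f g => rfl
  have hocc : ∀ p : V, (fun s : V → Bool => (spin s p + 1) / 2) = occ p := by
    intro p
    funext s
    unfold spin occ
    cases s p <;> norm_num
  have hocc' : ∀ p : V, ∀ s : V → Bool, (spin s p + 1) / 2 = occ p s := by
    intro p s
    rw [← hocc p]
  rw [hkey, hkey, hkey, hkey, hkey]
  simp only [hocc']
  -- abbreviations
  set X₁ := occ (V := V) u₁ with hX₁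
  set Y₁ := occ (V := V) v₁ with hY₁
  set X₂ := occ (V := V) u₂ with hX₂
  set Y₂ := occ (V := V) v₂ with hY₂
  set c₁ := bcov J h X₁ X₂ with hc₁
  set c₂ := bcov J h X₁ Y₂ with hc₂
  set c₃ := bcov J h X₂ Y₁ with hc₃
  set c₄ := bcov J h Y₁ Y₂ with hc₄
  -- basic positivity
  have nn : ∀ F G : (V → Bool) → ℝ, (∀ s, 0 ≤ F s) → (∀ s, 0 ≤ G s) →
      Monotone F → Monotone G → 0 ≤ bcov J h F G := fun F G a b c d =>
    bcov_nonneg J h hJ F G a b c d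
  have hX₁m := occ_monotone (V := V) u₁
  have hY₁m := occ_monotone (V := V) v₁
  have hX₂m := occ_monotone (V := V) u₂
  have hY₂m := occ_monotone (V := V) v₂
  have hc₁0 : 0 ≤ c₁ := nn _ _ (occ_nonneg u₁) (occ_nonneg u₂) hX₁m hX₂m
  have hc₂0 : 0 ≤ c₂ := nn _ _ (occ_nonneg u₁) (occ_nonneg v₂) hX₁m hY₂m
  have hc₃0 : 0 ≤ c₃ := nn _ _ (occ_nonneg u₂) (occ_nonneg v₁) hX₂m hY₁m
  have hc₄0 : 0 ≤ c₄ := nn _ _ (occ_nonneg v₁) (occ_nonneg v₂) hY₁m hY₂m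
  -- the product observables
  have hXY₁m : Monotone fun s => X₁ s * Y₁ s :=
    mono_mul (occ_nonneg u₁) (occ_nonneg v₁) hX₁m hY₁m
  have hXY₂m : Monotone fun s => X₂ s * Y₂ s :=
    mono_mul (occ_nonneg u₂) (occ_nonneg v₂) hX₂m hY₂m
  have hXY₁0 : ∀ s, 0 ≤ X₁ s * Y₁ s := fun s =>
    mul_nonneg (occ_nonneg u₁ s) (occ_nonneg v₁ s)
  have hXY₂0 : ∀ s, 0 ≤ X₂ s * Y₂ s := fun s =>
    mul_nonneg (occ_nonneg u₂ s) (occ_nonneg v₂ s)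
  -- expansion of the main covariance
  have e₁ : (fun s : V → Bool => X₁ s * (1 - Y₁ s)) = fun s => X₁ s - X₁ s * Y₁ s :=
    funext fun s => by ring
  have e₂ : (fun s : V → Bool => X₂ s * (1 - Y₂ s)) = fun s => X₂ s - X₂ s * Y₂ s :=
    funext fun s => by ring
  rw [e₁, e₂, bcov_sub_left, bcov_comm J h X₁, bcov_comm J h (fun s => X₁ s * Y₁ s),
    bcov_sub_left, bcov_sub_left]
  -- name the four covariances
  set t₂ := bcov J h (fun s => X₂ s * Y₂ s) X₁ with ht₂
  set t₃ := bcov J h X₂ (fun s => X₁ s * Y₁ s) with ht₃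
  set t₄ := bcov J h (fun s => X₂ s * Y₂ s) (fun s => X₁ s * Y₁ s) with ht₄
  have ht₂0 : 0 ≤ t₂ := nn _ _ hXY₂0 (occ_nonneg u₁) hXY₂m hX₁m
  have ht₃0 : 0 ≤ t₃ := nn _ _ (occ_nonneg u₂) hXY₁0 hX₂m hXY₁m
  have ht₄0 : 0 ≤ t₄ := nn _ _ hXY₂0 hXY₁0 hXY₂m hXY₁m
  -- upper bounds from the product-covariance lemma
  have ht₂le : t₂ ≤ c₁ + c₂ := by
    have := bcov_mul_le J h hJ u₂ v₂ X₁ (occ_nonneg u₁) hX₁m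
    rw [bcov_comm J h (occ u₂) X₁, bcov_comm J h (occ v₂) X₁] at this
    rw [ht₂, hc₁, hc₂]
    calc bcov J h (fun s => X₂ s * Y₂ s) X₁ ≤ bcov J h X₁ X₂ + bcov J h X₁ Y₂ := this
    _ = _ := rfl
  have ht₃le : t₃ ≤ c₁ + c₃ := by
    have := bcov_mul_le J h hJ u₁ v₁ X₂ (occ_nonneg u₂) hX₂m
    rw [bcov_comm J h (fun s => occ u₁ s * occ v₁ s) X₂] at this
    rw [bcov_comm J h (occ v₁) X₂] at this
    rw [ht₃, hc₁, hc₃]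
    calc bcov J h X₂ (fun s => X₁ s * Y₁ s) ≤ bcov J h (occ u₁) X₂ + bcov J h X₂ (occ v₁) :=
      this
    _ = bcov J h X₁ X₂ + bcov J h X₂ Y₁ := by rw [bcov_comm J h (occ u₁) X₂]
  have hYXY : bcov J h Y₁ (fun s => X₂ s * Y₂ s) ≤ c₃ + c₄ := by
    have := bcov_mul_le J h hJ u₂ v₂ Y₁ (occ_nonneg v₁) hY₁m
    rw [bcov_comm J h Y₁]
    rw [hc₃, hc₄]
    calc bcov J h (fun s => occ u₂ s * occ v₂ s) Y₁
        ≤ bcov J h (occ u₂) Y₁ + bcov J h (occ v₂) Y₁ := this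
    _ = bcov J h X₂ Y₁ + bcov J h Y₁ Y₂ := by rw [bcov_comm J h (occ v₂) Y₁]
  have hXXY : bcov J h X₁ (fun s => X₂ s * Y₂ s) ≤ c₁ + c₂ := by
    rw [bcov_comm J h X₁]
    exact ht₂le
  have ht₄le : t₄ ≤ c₁ + c₂ + c₃ + c₄ := by
    have key := bcov_mul_le J h hJ u₁ v₁ (fun s => X₂ s * Y₂ s) hXY₂0 hXY₂m
    rw [ht₄, bcov_comm J h (fun s => X₂ s * Y₂ s)]
    calc bcov J h (fun s => X₁ s * Y₁ s) (fun s => X₂ s * Y₂ s)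
        = bcov J h (fun s => occ u₁ s * occ v₁ s) (fun s => X₂ s * Y₂ s) := rfl
    _ ≤ bcov J h (occ u₁) (fun s => X₂ s * Y₂ s)
          + bcov J h (occ v₁) (fun s => X₂ s * Y₂ s) := key
    _ = bcov J h X₁ (fun s => X₂ s * Y₂ s) + bcov J h Y₁ (fun s => X₂ s * Y₂ s) := rfl
    _ ≤ (c₁ + c₂) + (c₃ + c₄) := add_le_add hXXY hYXY
    _ = c₁ + c₂ + c₃ + c₄ := by ring
  -- conclude
  rw [abs_of_nonneg hc₁0, abs_of_nonneg hc₂0, abs_of_nonneg hc₃0, abs_of_nonneg hc₄0]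
  rw [abs_le]
  have hcomm : bcov J h X₂ X₁ = c₁ := by rw [hc₁, bcov_comm]
  constructor <;> linarith
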